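/- arXiv:2603.03107 — 3 statements merged into one kernel-verified Lean document; each statement's English description precedes it below -/
import Mathlib

section
/- Assume the block Lipschitz condition holds. Then every global minimizer (X,Y,S) of problem (FB) satisfies: 𝕀_X = 𝕀_Y; when λ > 0, ‖X_i‖₂ ∉ (0, min{τ, λ/max{L_X, L_Y}}) and ‖Y_i‖₂ ∉ (0, min{τ, λ/max{L_X, L_Y}}) for every column index i; and when β > 0, |S_{ij}| ∉ (0, β/L_S) for every entry (i,j). -/
/-
Zeroing a single column of `X` or `Y`, or a single entry of `S`, keeps the point feasible and
lowers the penalty by exactly `λ` (resp. `β`), while by the block Lipschitz condition it raises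
the loss by at most `L_X ‖X_i‖₂`, `L_Y ‖Y_i‖₂` (resp. `L_S |S_ij|`). At a global minimizer the
saving cannot exceed the cost, so a nonzero column has norm at least `λ / L_X` (resp. `λ / L_Y`)
and a nonzero entry has modulus at least `β / L_S`. If column `i` of `X` is nonzero while that of
`Y` vanishes, zeroing `X_i` does not change `X Yᵀ` at all and saves `λ > 0`, so `𝕀_X = 𝕀_Y`.
-/

open Matrix Set
open scoped ENNReal

attribute [local instance] Matrix.frobeniusNormedAddCommGroup

noncomputable section

/-- number of nonzero entries (the ℓ0-norm). -/
def l0 {m n : ℕ} (S : Matrix (Fin m) (Fin n) ℝ) : ℕ :=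
  {p : Fin m × Fin n | S p.1 p.2 ≠ 0}.ncard

/-- number of nonzero columns. -/
def nnzc {m d : ℕ} (X : Matrix (Fin m) (Fin d) ℝ) : ℕ :=
  {i : Fin d | ∃ j, X j i ≠ 0}.ncard

/-- Euclidean norm of the `i`-th column. -/
def colNorm {m d : ℕ} (X : Matrix (Fin m) (Fin d) ℝ) (i : Fin d) : ℝ :=
  Real.sqrt (∑ j, (X j i) ^ 2)

/-- the column index set `𝕀_X`: nonzero columns if `λ > 0`, all columns if `λ = 0`. -/
def colIdx {m d : ℕ} (lam : ℝ) (X : Matrix (Fin m) (Fin d) ℝ) : Set (Fin d) :=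
  {i | 0 < lam → ∃ j, X j i ≠ 0}

/-- set of global minimizers of `g` on the feasible set `s`. -/
def globMin {α : Type*} (g : α → ℝ) (s : Set α) : Set α :=
  {a ∈ s | ∀ b ∈ s, g a ≤ g b}

variable {m n d : ℕ}

lemma colNorm_eq_zero_iff (X : Matrix (Fin m) (Fin d) ℝ) (k : Fin d) :
    colNorm X k = 0 ↔ ∀ j, X j k = 0 := by
  rw [colNorm, Real.sqrt_eq_zero (by positivity),
    Finset.sum_eq_zero_iff_of_nonneg fun j _ => sq_nonneg _]
  simp

lemma exists_ne_zero_of_colNorm_pos {X : Matrix (Fin m) (Fin d) ℝ} {k : Fin d}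
    (h : 0 < colNorm X k) : ∃ j, X j k ≠ 0 := by
  by_contra! hX
  exact h.ne' ((colNorm_eq_zero_iff X k).2 hX)

lemma colNorm_updateCol_zero_le (X : Matrix (Fin m) (Fin d) ℝ) (k i : Fin d) :
    colNorm (updateCol X k 0) i ≤ colNorm X i := by
  refine Real.sqrt_le_sqrt (Finset.sum_le_sum fun j _ => ?_)
  rw [updateCol_apply]
  split_ifs <;> simp [sq_nonneg]

lemma colNorm_sub_updateCol_zero (X : Matrix (Fin m) (Fin d) ℝ) (k : Fin d) :
    colNorm (X - updateCol X k 0) k = colNorm X k := by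
  simp [colNorm]

lemma nnzc_updateCol_zero_add_one {X : Matrix (Fin m) (Fin d) ℝ} {k : Fin d}
    (hk : ∃ j, X j k ≠ 0) : nnzc (updateCol X k 0) + 1 = nnzc X := by
  have hsupp : {i | ∃ j, updateCol X k 0 j i ≠ 0} = {i | ∃ j, X j i ≠ 0} \ {k} := by
    ext i
    rcases eq_or_ne i k with rfl | hi
    · simp
    · simp [hi]
  rw [nnzc, hsupp]
  exact ncard_sdiff_singleton_add_one hk (toFinite _)

lemma updateCol_zero_mul_transpose (X : Matrix (Fin m) (Fin d) ℝ) {Y : Matrix (Fin n) (Fin d) ℝ}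
    {k : Fin d} (hY : ∀ j, Y j k = 0) : updateCol X k 0 * Yᵀ = X * Yᵀ := by
  ext a b
  simp only [mul_apply, transpose_apply]
  refine Finset.sum_congr rfl fun i _ => ?_
  rcases eq_or_ne i k with rfl | hi
  · simp [hY]
  · rw [updateCol_ne hi]

lemma mul_transpose_updateCol_zero {X : Matrix (Fin m) (Fin d) ℝ} (Y : Matrix (Fin n) (Fin d) ℝ)
    {k : Fin d} (hX : ∀ j, X j k = 0) : X * (updateCol Y k 0)ᵀ = X * Yᵀ := by
  simpa [transpose_mul] using congrArg transpose (updateCol_zero_mul_transpose Y hX)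

def eraseEntry (S : Matrix (Fin m) (Fin n) ℝ) (i : Fin m) (j : Fin n) : Matrix (Fin m) (Fin n) ℝ :=
  of fun a b => if (a, b) = (i, j) then 0 else S a b

@[simp]
lemma eraseEntry_self (S : Matrix (Fin m) (Fin n) ℝ) (i : Fin m) (j : Fin n) :
    eraseEntry S i j i j = 0 := by
  simp [eraseEntry]

lemma eraseEntry_of_ne (S : Matrix (Fin m) (Fin n) ℝ) {i a : Fin m} {j b : Fin n}
    (h : (a, b) ≠ (i, j)) : eraseEntry S i j a b = S a b :=
  if_neg h

lemma l0_eraseEntry_add_one {S : Matrix (Fin m) (Fin n) ℝ} {i : Fin m} {j : Fin n}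
    (hS : S i j ≠ 0) : l0 (eraseEntry S i j) + 1 = l0 S := by
  have hsupp : {p : Fin m × Fin n | eraseEntry S i j p.1 p.2 ≠ 0}
      = {p : Fin m × Fin n | S p.1 p.2 ≠ 0} \ {(i, j)} := by
    ext p
    rcases eq_or_ne p (i, j) with rfl | hp
    · simp
    · simp [eraseEntry_of_ne S hp, hp]
  rw [l0, hsupp]
  exact ncard_sdiff_singleton_add_one hS (toFinite _)

lemma mul_lt_of_lt_div_of_le {L M c a : ℝ} (hL : 0 < L) (hLM : L ≤ M) (hc : 0 ≤ c)
    (h : c < a / M) : L * c < a :=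
  calc L * c ≤ M * c := mul_le_mul_of_nonneg_right hLM hc
    _ < a := (lt_div_iff₀' (hL.trans_le hLM)).1 h

def colBall (τ : ℝ≥0∞) : Set (Matrix (Fin m) (Fin d) ℝ) :=
  {X | ∀ i, ENNReal.ofReal (colNorm X i) ≤ τ}

def entryBox (κ1 κ2 : Fin m → Fin n → EReal) : Set (Matrix (Fin m) (Fin n) ℝ) :=
  {S | ∀ i j, κ1 i j ≤ (S i j : EReal) ∧ (S i j : EReal) ≤ κ2 i j}

def fbFeasible (κ1 κ2 : Fin m → Fin n → EReal) (τ : ℝ≥0∞) :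
    Set (Matrix (Fin m) (Fin d) ℝ × Matrix (Fin n) (Fin d) ℝ × Matrix (Fin m) (Fin n) ℝ) :=
  {t | t.1 ∈ colBall τ ∧ t.2.1 ∈ colBall τ ∧ t.2.2 ∈ entryBox κ1 κ2}

def fbObjective (f : Matrix (Fin m) (Fin n) ℝ → Matrix (Fin m) (Fin n) ℝ → ℝ) (lam beta : ℝ)
    (t : Matrix (Fin m) (Fin d) ℝ × Matrix (Fin n) (Fin d) ℝ × Matrix (Fin m) (Fin n) ℝ) : ℝ :=
  f (t.1 * t.2.1ᵀ) t.2.2 + lam * ((nnzc t.1 : ℝ) + (nnzc t.2.1 : ℝ)) + beta * (l0 t.2.2 : ℝ)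

lemma updateCol_zero_mem_colBall {τ : ℝ≥0∞} {X : Matrix (Fin m) (Fin d) ℝ} (hX : X ∈ colBall τ)
    (k : Fin d) : updateCol X k 0 ∈ colBall τ := fun i =>
  (ENNReal.ofReal_le_ofReal (colNorm_updateCol_zero_le X k i)).trans (hX i)

lemma eraseEntry_mem_entryBox {κ1 κ2 : Fin m → Fin n → EReal} (hκ1 : ∀ i j, κ1 i j ≤ 0)
    (hκ2 : ∀ i j, 0 ≤ κ2 i j) {S : Matrix (Fin m) (Fin n) ℝ} (hS : S ∈ entryBox κ1 κ2)
    (i : Fin m) (j : Fin n) : eraseEntry S i j ∈ entryBox κ1 κ2 := by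
  intro a b
  rcases eq_or_ne (a, b) (i, j) with h | h
  · obtain ⟨rfl, rfl⟩ := Prod.mk.inj h
    simpa using ⟨hκ1 a b, hκ2 a b⟩
  · rw [eraseEntry_of_ne S h]
    exact hS a b

section Minimizer

variable {f : Matrix (Fin m) (Fin n) ℝ → Matrix (Fin m) (Fin n) ℝ → ℝ} {lam beta : ℝ}
  {κ1 κ2 : Fin m → Fin n → EReal} {τ : ℝ≥0∞}
  {X : Matrix (Fin m) (Fin d) ℝ} {Y : Matrix (Fin n) (Fin d) ℝ} {S : Matrix (Fin m) (Fin n) ℝ}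

lemma le_sub_of_mem_globMin_updateCol_left
    (hmin : (X, Y, S) ∈ globMin (fbObjective f lam beta) (fbFeasible κ1 κ2 τ)) {k : Fin d}
    (hk : ∃ j, X j k ≠ 0) : lam ≤ f (updateCol X k 0 * Yᵀ) S - f (X * Yᵀ) S := by
  obtain ⟨⟨hX, hY, hS⟩, hopt⟩ := hmin
  have hle := hopt (updateCol X k 0, Y, S) ⟨updateCol_zero_mem_colBall hX k, hY, hS⟩
  have hcount : (nnzc (updateCol X k 0) : ℝ) + 1 = nnzc X := mod_cast nnzc_updateCol_zero_add_one hk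
  simp only [fbObjective, ← hcount] at hle
  linear_combination hle

lemma le_sub_of_mem_globMin_updateCol_right
    (hmin : (X, Y, S) ∈ globMin (fbObjective f lam beta) (fbFeasible κ1 κ2 τ)) {k : Fin d}
    (hk : ∃ j, Y j k ≠ 0) : lam ≤ f (X * (updateCol Y k 0)ᵀ) S - f (X * Yᵀ) S := by
  obtain ⟨⟨hX, hY, hS⟩, hopt⟩ := hmin
  have hle := hopt (X, updateCol Y k 0, S) ⟨hX, updateCol_zero_mem_colBall hY k, hS⟩
  have hcount : (nnzc (updateCol Y k 0) : ℝ) + 1 = nnzc Y := mod_cast nnzc_updateCol_zero_add_one hk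
  simp only [fbObjective, ← hcount] at hle
  linear_combination hle

lemma le_sub_of_mem_globMin_eraseEntry (hκ1 : ∀ i j, κ1 i j ≤ 0) (hκ2 : ∀ i j, 0 ≤ κ2 i j)
    (hmin : (X, Y, S) ∈ globMin (fbObjective f lam beta) (fbFeasible κ1 κ2 τ)) {i : Fin m}
    {j : Fin n} (hij : S i j ≠ 0) : beta ≤ f (X * Yᵀ) (eraseEntry S i j) - f (X * Yᵀ) S := by
  obtain ⟨⟨hX, hY, hS⟩, hopt⟩ := hmin
  have hle := hopt (X, Y, eraseEntry S i j) ⟨hX, hY, eraseEntry_mem_entryBox hκ1 hκ2 hS i j⟩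
  have hcount : (l0 (eraseEntry S i j) : ℝ) + 1 = l0 S := mod_cast l0_eraseEntry_add_one hij
  simp only [fbObjective, ← hcount] at hle
  linear_combination hle

lemma exists_ne_zero_right_of_mem_globMin
    (hmin : (X, Y, S) ∈ globMin (fbObjective f lam beta) (fbFeasible κ1 κ2 τ)) (hlam : 0 < lam)
    {k : Fin d} (hX : ∃ j, X j k ≠ 0) : ∃ j, Y j k ≠ 0 := by
  by_contra! hY
  have hgain := le_sub_of_mem_globMin_updateCol_left hmin hX
  rw [updateCol_zero_mul_transpose X hY, sub_self] at hgain
  exact hgain.not_gt hlam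

lemma exists_ne_zero_left_of_mem_globMin
    (hmin : (X, Y, S) ∈ globMin (fbObjective f lam beta) (fbFeasible κ1 κ2 τ)) (hlam : 0 < lam)
    {k : Fin d} (hY : ∃ j, Y j k ≠ 0) : ∃ j, X j k ≠ 0 := by
  by_contra! hX
  have hgain := le_sub_of_mem_globMin_updateCol_right hmin hY
  rw [mul_transpose_updateCol_zero Y hX, sub_self] at hgain
  exact hgain.not_gt hlam

end Minimizer

theorem stmt10_general (m n d : ℕ)
    (lam beta : ℝ)
    (f : Matrix (Fin m) (Fin n) ℝ → Matrix (Fin m) (Fin n) ℝ → ℝ)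
    (κ1 κ2 : Fin m → Fin n → EReal)
    (hκ1 : ∀ i j, κ1 i j ≤ 0) (hκ2 : ∀ i j, 0 ≤ κ2 i j)
    (BS : Set (Matrix (Fin m) (Fin n) ℝ))
    (hBS : BS = {S | ∀ i j, κ1 i j ≤ (S i j : EReal) ∧ (S i j : EReal) ≤ κ2 i j})
    (τ : ℝ≥0∞)
    (BX : Set (Matrix (Fin m) (Fin d) ℝ))
    (hBX : BX = {X | ∀ i, ENNReal.ofReal (colNorm X i) ≤ τ})
    (BY : Set (Matrix (Fin n) (Fin d) ℝ))
    (hBY : BY = {Y | ∀ i, ENNReal.ofReal (colNorm Y i) ≤ τ})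
    (feasFB : Set (Matrix (Fin m) (Fin d) ℝ × Matrix (Fin n) (Fin d) ℝ × Matrix (Fin m) (Fin n) ℝ))
    (hfeasFB : feasFB = {t | t.1 ∈ BX ∧ t.2.1 ∈ BY ∧ t.2.2 ∈ BS})
    (FF : Matrix (Fin m) (Fin d) ℝ × Matrix (Fin n) (Fin d) ℝ × Matrix (Fin m) (Fin n) ℝ → ℝ)
    (hFF : FF = fun t => f (t.1 * t.2.1ᵀ) t.2.2 +
      lam * ((nnzc t.1 : ℝ) + (nnzc t.2.1 : ℝ)) + beta * (l0 t.2.2 : ℝ))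
    -- block Lipschitz condition on f over 𝓑
    (LX LY LS : ℝ) (hLX : 0 < LX) (hLY : 0 < LY) (hLS : 0 < LS)
    (hLipX : 0 < lam → ∀ (X X' : Matrix (Fin m) (Fin d) ℝ) (Y : Matrix (Fin n) (Fin d) ℝ)
      (S : Matrix (Fin m) (Fin n) ℝ) (k : Fin d), (X, Y, S) ∈ feasFB → (X', Y, S) ∈ feasFB →
      (∀ i, i ≠ k → ∀ j, X j i = X' j i) →
      |f (X * Yᵀ) S - f (X' * Yᵀ) S| ≤ LX * colNorm (X - X') k)
    (hLipY : 0 < lam → ∀ (X : Matrix (Fin m) (Fin d) ℝ) (Y Y' : Matrix (Fin n) (Fin d) ℝ)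
      (S : Matrix (Fin m) (Fin n) ℝ) (k : Fin d), (X, Y, S) ∈ feasFB → (X, Y', S) ∈ feasFB →
      (∀ i, i ≠ k → ∀ j, Y j i = Y' j i) →
      |f (X * Yᵀ) S - f (X * Y'ᵀ) S| ≤ LY * colNorm (Y - Y') k)
    (hLipS : 0 < beta → ∀ (X : Matrix (Fin m) (Fin d) ℝ) (Y : Matrix (Fin n) (Fin d) ℝ)
      (S S' : Matrix (Fin m) (Fin n) ℝ) (i : Fin m) (j : Fin n),
      (X, Y, S) ∈ feasFB → (X, Y, S') ∈ feasFB →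
      (∀ i' j', (i', j') ≠ (i, j) → S i' j' = S' i' j') →
      |f (X * Yᵀ) S - f (X * Yᵀ) S'| ≤ LS * |S i j - S' i j|)
    -- a global minimizer of (FB)
    (X : Matrix (Fin m) (Fin d) ℝ) (Y : Matrix (Fin n) (Fin d) ℝ) (S : Matrix (Fin m) (Fin n) ℝ)
    (hmin : (X, Y, S) ∈ globMin FF feasFB) :
    colIdx lam X = colIdx lam Y ∧
    (0 < lam → ∀ i,
      ¬(0 < colNorm X i ∧ colNorm X i < lam / max LX LY ∧
          ENNReal.ofReal (colNorm X i) < τ) ∧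
      ¬(0 < colNorm Y i ∧ colNorm Y i < lam / max LX LY ∧
          ENNReal.ofReal (colNorm Y i) < τ)) ∧
    (0 < beta → ∀ i j, |S i j| ∉ Set.Ioo 0 (beta / LS)) := by
  subst hFF hfeasFB hBX hBY hBS
  change (X, Y, S) ∈ globMin (fbObjective f lam beta) (fbFeasible κ1 κ2 τ) at hmin
  obtain ⟨hX, hY, hS⟩ := hmin.1
  refine ⟨Set.ext fun k => forall_congr' fun hlam =>
    ⟨exists_ne_zero_right_of_mem_globMin hmin hlam, exists_ne_zero_left_of_mem_globMin hmin hlam⟩,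
    fun hlam k => ⟨?_, ?_⟩, fun hbeta i j hij => ?_⟩
  · rintro ⟨hpos, hsmall, -⟩
    have hgain := le_sub_of_mem_globMin_updateCol_left hmin (exists_ne_zero_of_colNorm_pos hpos)
    have hlip := hLipX hlam X (updateCol X k 0) Y S k ⟨hX, hY, hS⟩
      ⟨updateCol_zero_mem_colBall hX k, hY, hS⟩ fun i hi j => (updateCol_ne hi).symm
    rw [colNorm_sub_updateCol_zero] at hlip
    have hcost := mul_lt_of_lt_div_of_le hLX (le_max_left LX LY) hpos.le hsmall
    linarith [(abs_sub_le_iff.1 hlip).2]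
  · rintro ⟨hpos, hsmall, -⟩
    have hgain := le_sub_of_mem_globMin_updateCol_right hmin (exists_ne_zero_of_colNorm_pos hpos)
    have hlip := hLipY hlam X Y (updateCol Y k 0) S k ⟨hX, hY, hS⟩
      ⟨hX, updateCol_zero_mem_colBall hY k, hS⟩ fun i hi j => (updateCol_ne hi).symm
    rw [colNorm_sub_updateCol_zero] at hlip
    have hcost := mul_lt_of_lt_div_of_le hLY (le_max_right LX LY) hpos.le hsmall
    linarith [(abs_sub_le_iff.1 hlip).2]
  · have hgain := le_sub_of_mem_globMin_eraseEntry hκ1 hκ2 hmin (abs_pos.1 hij.1)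
    have hlip := hLipS hbeta X Y S (eraseEntry S i j) i j ⟨hX, hY, hS⟩
      ⟨hX, hY, eraseEntry_mem_entryBox hκ1 hκ2 hS i j⟩ fun a b h => (eraseEntry_of_ne S h).symm
    rw [eraseEntry_self, sub_zero] at hlip
    have hcost := (lt_div_iff₀' hLS).1 hij.2
    linarith [(abs_sub_le_iff.1 hlip).2]

/-- Under the block Lipschitz condition, every global minimizer of (FB) satisfies
`𝕀_X = 𝕀_Y`, `‖X_i‖₂, ‖Y_i‖₂ ∉ (0, min{τ, λ/max{L_X,L_Y}})` when `λ > 0`, and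
`|S_{ij}| ∉ (0, β/L_S)` when `β > 0`. -/
theorem stmt10 (m n d : ℕ) (hm : 0 < m) (hn : 0 < n) (hd : 0 < d)
    (lam beta : ℝ) (hlam : 0 ≤ lam) (hbeta : 0 ≤ beta)
    (f : Matrix (Fin m) (Fin n) ℝ → Matrix (Fin m) (Fin n) ℝ → ℝ)
    (hf0 : ∀ Z S, 0 ≤ f Z S)
    (hfLip : LocallyLipschitz fun p : Matrix (Fin m) (Fin n) ℝ × Matrix (Fin m) (Fin n) ℝ =>
      f p.1 p.2)
    (κ1 κ2 : Fin m → Fin n → EReal)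
    (hκ1 : ∀ i j, κ1 i j ≤ 0) (hκ2 : ∀ i j, 0 ≤ κ2 i j)
    (BS : Set (Matrix (Fin m) (Fin n) ℝ))
    (hBS : BS = {S | ∀ i j, κ1 i j ≤ (S i j : EReal) ∧ (S i j : EReal) ≤ κ2 i j})
    (τ : ℝ≥0∞)
    (BX : Set (Matrix (Fin m) (Fin d) ℝ))
    (hBX : BX = {X | ∀ i, ENNReal.ofReal (colNorm X i) ≤ τ})
    (BY : Set (Matrix (Fin n) (Fin d) ℝ))
    (hBY : BY = {Y | ∀ i, ENNReal.ofReal (colNorm Y i) ≤ τ})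
    (feasFB : Set (Matrix (Fin m) (Fin d) ℝ × Matrix (Fin n) (Fin d) ℝ × Matrix (Fin m) (Fin n) ℝ))
    (hfeasFB : feasFB = {t | t.1 ∈ BX ∧ t.2.1 ∈ BY ∧ t.2.2 ∈ BS})
    (FF : Matrix (Fin m) (Fin d) ℝ × Matrix (Fin n) (Fin d) ℝ × Matrix (Fin m) (Fin n) ℝ → ℝ)
    (hFF : FF = fun t => f (t.1 * t.2.1ᵀ) t.2.2 +
      lam * ((nnzc t.1 : ℝ) + (nnzc t.2.1 : ℝ)) + beta * (l0 t.2.2 : ℝ))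
    -- block Lipschitz condition on f over 𝓑
    (LX LY LS : ℝ) (hLX : 0 < LX) (hLY : 0 < LY) (hLS : 0 < LS)
    (hLipX : 0 < lam → ∀ (X X' : Matrix (Fin m) (Fin d) ℝ) (Y : Matrix (Fin n) (Fin d) ℝ)
      (S : Matrix (Fin m) (Fin n) ℝ) (k : Fin d), (X, Y, S) ∈ feasFB → (X', Y, S) ∈ feasFB →
      (∀ i, i ≠ k → ∀ j, X j i = X' j i) →
      |f (X * Yᵀ) S - f (X' * Yᵀ) S| ≤ LX * colNorm (X - X') k)
    (hLipY : 0 < lam → ∀ (X : Matrix (Fin m) (Fin d) ℝ) (Y Y' : Matrix (Fin n) (Fin d) ℝ)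
      (S : Matrix (Fin m) (Fin n) ℝ) (k : Fin d), (X, Y, S) ∈ feasFB → (X, Y', S) ∈ feasFB →
      (∀ i, i ≠ k → ∀ j, Y j i = Y' j i) →
      |f (X * Yᵀ) S - f (X * Y'ᵀ) S| ≤ LY * colNorm (Y - Y') k)
    (hLipS : 0 < beta → ∀ (X : Matrix (Fin m) (Fin d) ℝ) (Y : Matrix (Fin n) (Fin d) ℝ)
      (S S' : Matrix (Fin m) (Fin n) ℝ) (i : Fin m) (j : Fin n),
      (X, Y, S) ∈ feasFB → (X, Y, S') ∈ feasFB →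
      (∀ i' j', (i', j') ≠ (i, j) → S i' j' = S' i' j') →
      |f (X * Yᵀ) S - f (X * Yᵀ) S'| ≤ LS * |S i j - S' i j|)
    -- a global minimizer of (FB)
    (X : Matrix (Fin m) (Fin d) ℝ) (Y : Matrix (Fin n) (Fin d) ℝ) (S : Matrix (Fin m) (Fin n) ℝ)
    (hmin : (X, Y, S) ∈ globMin FF feasFB) :
    colIdx lam X = colIdx lam Y ∧
    (0 < lam → ∀ i,
      ¬(0 < colNorm X i ∧ colNorm X i < lam / max LX LY ∧
          ENNReal.ofReal (colNorm X i) < τ) ∧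
      ¬(0 < colNorm Y i ∧ colNorm Y i < lam / max LX LY ∧
          ENNReal.ofReal (colNorm Y i) < τ)) ∧
    (0 < beta → ∀ i j, |S i j| ∉ Set.Ioo 0 (beta / LS)) :=
  stmt10_general m n d lam beta f κ1 κ2 hκ1 hκ2 BS hBS τ BX hBX BY hBY feasFB hfeasFB FF hFF LX LY
    LS hLX hLY hLS hLipX hLipY hLipS X Y S hmin
end
end

section
/- For every z ∈ ℝ^k with ‖z‖₁ ≤ γ/ρ̄, the set of minimizers over v ∈ [l,u] of the function v ↦ γ·θ₁(‖v‖₁/ρ) + ½‖v − z‖₂² is exactly {0}, and likewise the set of minimizers over v ∈ [l,u] of v ↦ γ·‖v‖₁/ρ̄ + ½‖v − z‖₂² is exactly {0}. -/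
/-! Since `|zᵢ| ≤ ‖z‖₁ ≤ γ/ρ̄`, each coordinate satisfies `vᵢ zᵢ ≤ (γ/ρ̄)|vᵢ|`, so expanding the square
gives `γ‖v‖₁/ρ̄ + ½‖v − z‖₂² ≥ ½‖z‖₂² + ½‖v‖₂²`: the ℓ1 objective exceeds its value at `0` by at least
`½‖v‖₂²`. The lower bound `θ₁(t) ≥ η̃ t` together with `ρ ≤ η̃ ρ̄` makes the `θ₁` objective dominate the
ℓ1 objective while agreeing with it at `0`, so `0` is the strict minimizer of both. -/

theorem sep_forall_le_eq_singleton_of_lt {α : Type*} {S : Set α} {F : α → ℝ} {a : α}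
    (ha : a ∈ S) (hlt : ∀ v ∈ S, v ≠ a → F a < F v) :
    {v ∈ S | ∀ w ∈ S, F v ≤ F w} = {a} := by
  ext v
  constructor
  · rintro ⟨hv, hmin⟩
    by_contra hne
    exact (hmin a ha).not_gt (hlt v hv hne)
  · rintro rfl
    exact ⟨ha, fun w hw => (eq_or_ne w v).elim (fun h => h ▸ le_rfl) fun h => (hlt w hw h).le⟩

section Coordinates

variable {ι : Type*} [Fintype ι]

theorem sum_sq_pos_of_ne_zero {v : ι → ℝ} (hv : v ≠ 0) : 0 < ∑ i, v i ^ 2 := by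
  obtain ⟨i, hi⟩ := Function.ne_iff.mp hv
  exact Finset.sum_pos' (fun j _ => sq_nonneg (v j)) ⟨i, Finset.mem_univ i, sq_pos_of_ne_zero hi⟩

theorem half_sum_sq_add_half_sum_sq_le_l1_add {c : ℝ} {z : ι → ℝ} (hz : ∀ i, |z i| ≤ c)
    (v : ι → ℝ) :
    (1 / 2) * ∑ i, z i ^ 2 + (1 / 2) * ∑ i, v i ^ 2 ≤
      c * ∑ i, |v i| + (1 / 2) * ∑ i, (v i - z i) ^ 2 := by
  have hcoord : ∀ i, (1 / 2) * z i ^ 2 + (1 / 2) * v i ^ 2 ≤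
      c * |v i| + (1 / 2) * (v i - z i) ^ 2 := fun i => by
    have hcross : v i * z i ≤ c * |v i| := calc
      v i * z i ≤ |v i| * |z i| := (le_abs_self _).trans (abs_mul _ _).le
      _ ≤ |v i| * c := mul_le_mul_of_nonneg_left (hz i) (abs_nonneg _)
      _ = c * |v i| := mul_comm _ _
    nlinarith
  simpa only [Finset.mul_sum, Finset.sum_add_distrib] using
    Finset.sum_le_sum fun i (_ : i ∈ Finset.univ) => hcoord i

end Coordinates

theorem div_le_apply_div_of_mul_le {θ : ℝ → ℝ} {η ρ ρbar : ℝ} (hlb : ∀ t, 0 ≤ t → η * t ≤ θ t)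
    (hρ0 : 0 < ρ) (hρbar : 0 < ρbar) (hρ : ρ ≤ η * ρbar) {t : ℝ} (ht : 0 ≤ t) :
    t / ρbar ≤ θ (t / ρ) := calc
  t / ρbar = t * ρ / (ρ * ρbar) := by field_simp
  _ ≤ t * (η * ρbar) / (ρ * ρbar) := by gcongr
  _ = η * (t / ρ) := by field_simp
  _ ≤ θ (t / ρ) := hlb _ (div_nonneg ht hρ0.le)

theorem stmt11_general (k : ℕ)
    (θ1 : ℝ → ℝ)
    (h0 : θ1 0 = 0)
    (ηt : ℝ)
    (hlb : ∀ t, 0 ≤ t → ηt * t ≤ θ1 t)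
    (γ ρbar ρ : ℝ) (hγ : 0 < γ) (hρbar : 0 < ρbar)
    (hρ0 : 0 < ρ) (hρ : ρ ≤ min ηt 1 * ρbar)
    (l u : Fin k → ℝ) (hl : ∀ i, l i ≤ 0) (hu : ∀ i, 0 ≤ u i)
    (z : Fin k → ℝ) (hz : ∑ i, |z i| ≤ γ / ρbar) :
    {v ∈ Set.Icc l u | ∀ w ∈ Set.Icc l u,
        γ * θ1 ((∑ i, |v i|) / ρ) + (1 / 2) * ∑ i, (v i - z i) ^ 2 ≤
        γ * θ1 ((∑ i, |w i|) / ρ) + (1 / 2) * ∑ i, (w i - z i) ^ 2} = {0} ∧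
    {v ∈ Set.Icc l u | ∀ w ∈ Set.Icc l u,
        γ * ((∑ i, |v i|) / ρbar) + (1 / 2) * ∑ i, (v i - z i) ^ 2 ≤
        γ * ((∑ i, |w i|) / ρbar) + (1 / 2) * ∑ i, (w i - z i) ^ 2} = {0} := by
  have hzero : (0 : Fin k → ℝ) ∈ Set.Icc l u := ⟨hl, hu⟩
  have hzi : ∀ i, |z i| ≤ γ / ρbar := fun i =>
    (Finset.single_le_sum (fun j _ => abs_nonneg (z j)) (Finset.mem_univ i)).trans hz
  have hρη : ρ ≤ ηt * ρbar := hρ.trans (by gcongr; exact min_le_left _ _)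
  have hgrowth : ∀ v : Fin k → ℝ, v ≠ 0 →
      (1 / 2) * ∑ i, z i ^ 2 < γ * ((∑ i, |v i|) / ρbar) + (1 / 2) * ∑ i, (v i - z i) ^ 2 :=
    fun v hv => by
      have hexpand := half_sum_sq_add_half_sum_sq_le_l1_add hzi v
      have hpos := sum_sq_pos_of_ne_zero hv
      rw [← mul_div_assoc, mul_div_right_comm]
      linarith
  refine ⟨sep_forall_le_eq_singleton_of_lt hzero fun v _ hv => ?_,
    sep_forall_le_eq_singleton_of_lt hzero fun v _ hv => ?_⟩
  · have hθ := div_le_apply_div_of_mul_le hlb hρ0 hρbar hρη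
      (Finset.sum_nonneg fun i (_ : i ∈ Finset.univ) => abs_nonneg (v i))
    simp only [Pi.zero_apply, abs_zero, Finset.sum_const_zero, zero_div, h0, mul_zero, zero_add,
      zero_sub, neg_sq]
    linarith [hgrowth v hv, mul_le_mul_of_nonneg_left hθ hγ.le]
  · simpa only [Pi.zero_apply, abs_zero, Finset.sum_const_zero, zero_div, mul_zero, zero_add,
      zero_sub, neg_sq] using hgrowth v hv

/-- For `z` with `‖z‖₁ ≤ γ/ρ̄`, the minimizers over the box `[l,u]` of
`v ↦ γ·θ₁(‖v‖₁/ρ) + ½‖v−z‖₂²` and of `v ↦ γ·‖v‖₁/ρ̄ + ½‖v−z‖₂²` are exactly `{0}`. -/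
theorem stmt11 (k : ℕ) (hk : 0 < k)
    (θ1 : ℝ → ℝ)
    (hmono : ∀ a b, 0 ≤ a → a ≤ b → θ1 a ≤ θ1 b)
    (h0 : θ1 0 = 0)
    (hnn : ∀ t, 0 ≤ t → 0 ≤ θ1 t)
    (ηt : ℝ) (hηt : 0 < ηt)
    (hlb : ∀ t, 0 ≤ t → ηt * t ≤ θ1 t)
    (γ ρbar ρ : ℝ) (hγ : 0 < γ) (hρbar : 0 < ρbar)
    (hρ0 : 0 < ρ) (hρ : ρ ≤ min ηt 1 * ρbar)
    (l u : Fin k → ℝ) (hl : ∀ i, l i ≤ 0) (hu : ∀ i, 0 ≤ u i)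
    (z : Fin k → ℝ) (hz : ∑ i, |z i| ≤ γ / ρbar) :
    {v ∈ Set.Icc l u | ∀ w ∈ Set.Icc l u,
        γ * θ1 ((∑ i, |v i|) / ρ) + (1 / 2) * ∑ i, (v i - z i) ^ 2 ≤
        γ * θ1 ((∑ i, |w i|) / ρ) + (1 / 2) * ∑ i, (w i - z i) ^ 2} = {0} ∧
    {v ∈ Set.Icc l u | ∀ w ∈ Set.Icc l u,
        γ * ((∑ i, |v i|) / ρbar) + (1 / 2) * ∑ i, (v i - z i) ^ 2 ≤
        γ * ((∑ i, |w i|) / ρbar) + (1 / 2) * ∑ i, (w i - z i) ^ 2} = {0} :=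
  stmt11_general k θ1 h0 ηt hlb γ ρbar ρ hγ hρbar hρ0 hρ l u hl hu z hz
end

section
/- For every z ∈ ℝ^k with ‖z‖₂ ≤ γ/ρ̄, the set of minimizers over v with ‖v‖₂ ≤ ς of the function v ↦ γ·θ₁(‖v‖₂/ρ) + ½‖v − z‖₂² is exactly {0}, and likewise the set of minimizers over v with ‖v‖₂ ≤ ς of v ↦ γ·‖v‖₂/ρ̄ + ½‖v − z‖₂² is exactly {0}. -/
/-!
Expanding the square, `F(v) - F(0) = φ(v) - ⟪v, z⟫ + ½‖v‖²` for `F(v) = φ(v) + ½‖v - z‖²`.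
Both penalties satisfy `φ(0) = 0` and `φ(v) ≥ (γ/ρ̄)‖v‖ ≥ ‖z‖‖v‖ ≥ ⟪v, z⟫`, for `γ·θ₁(‖v‖/ρ)` because
`θ₁(t) ≥ η̃ t` and `ρ ≤ η̃ ρ̄`. Hence `F(v) ≥ F(0) + ½‖v‖²`, so `0` is the unique minimizer.
-/

open Set

noncomputable section

section InnerProductSpace

variable {E : Type*} [NormedAddCommGroup E] [InnerProductSpace ℝ E]

lemma half_norm_sq_add_half_norm_sq_le {z v : E} {c a : ℝ} (hz : ‖z‖ ≤ c) (ha : c * ‖v‖ ≤ a) :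
    (1 / 2) * ‖z‖ ^ 2 + (1 / 2) * ‖v‖ ^ 2 ≤ a + (1 / 2) * ‖v - z‖ ^ 2 := by
  have hinner : inner ℝ v z ≤ a :=
    calc inner ℝ v z ≤ ‖v‖ * ‖z‖ := real_inner_le_norm v z
      _ ≤ c * ‖v‖ := by rw [mul_comm]; exact mul_le_mul_of_nonneg_right hz (norm_nonneg v)
      _ ≤ a := ha
  rw [norm_sub_sq_real]
  linarith

lemma setOf_minimizer_add_half_norm_sub_sq_eq_zero {K : Set E} (h0K : 0 ∈ K) {φ : E → ℝ}
    {c : ℝ} {z : E} (hz : ‖z‖ ≤ c) (hφ0 : φ 0 = 0) (hφ : ∀ v, c * ‖v‖ ≤ φ v) :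
    {v | v ∈ K ∧ ∀ w ∈ K, φ v + (1 / 2) * ‖v - z‖ ^ 2 ≤ φ w + (1 / 2) * ‖w - z‖ ^ 2} = {0} := by
  have hgrowth : ∀ v, φ 0 + (1 / 2) * ‖0 - z‖ ^ 2 + (1 / 2) * ‖v‖ ^ 2 ≤
      φ v + (1 / 2) * ‖v - z‖ ^ 2 := by
    intro v
    rw [hφ0, zero_sub, norm_neg, zero_add]
    exact half_norm_sq_add_half_norm_sq_le hz (hφ v)
  ext v
  simp only [mem_ofPred_eq, mem_singleton_iff]
  constructor
  · rintro ⟨-, hmin⟩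
    have hv : ‖v‖ ^ 2 ≤ 0 := by linarith [hmin 0 h0K, hgrowth v]
    exact norm_eq_zero.mp (pow_eq_zero_iff two_ne_zero |>.mp (le_antisymm hv (sq_nonneg _)))
  · rintro rfl
    exact ⟨h0K, fun w _ => by linarith [hgrowth w, sq_nonneg ‖w‖]⟩

end InnerProductSpace

lemma sqrt_sum_sq_eq_norm_toLp {ι : Type*} [Fintype ι] (v : ι → ℝ) :
    Real.sqrt (∑ i, v i ^ 2) = ‖WithLp.toLp 2 v‖ := by
  simp [EuclideanSpace.norm_eq]

lemma sum_sub_sq_eq_norm_toLp_sub_sq {ι : Type*} [Fintype ι] (v z : ι → ℝ) :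
    ∑ i, (v i - z i) ^ 2 = ‖WithLp.toLp 2 v - WithLp.toLp 2 z‖ ^ 2 := by
  rw [← WithLp.toLp_sub, ← sqrt_sum_sq_eq_norm_toLp, Real.sq_sqrt (by positivity)]
  rfl

lemma setOf_minimizer_on_euclideanBall_eq_zero {ι : Type*} [Fintype ι] {r : ℝ} (hr : 0 ≤ r)
    {φ : EuclideanSpace ℝ ι → ℝ} {c : ℝ} {z : ι → ℝ} (hz : ‖WithLp.toLp 2 z‖ ≤ c)
    (hφ0 : φ 0 = 0) (hφ : ∀ v, c * ‖v‖ ≤ φ v) :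
    {v : ι → ℝ | ‖WithLp.toLp 2 v‖ ≤ r ∧ ∀ w : ι → ℝ, ‖WithLp.toLp 2 w‖ ≤ r →
      φ (WithLp.toLp 2 v) + (1 / 2) * ‖WithLp.toLp 2 v - WithLp.toLp 2 z‖ ^ 2 ≤
      φ (WithLp.toLp 2 w) + (1 / 2) * ‖WithLp.toLp 2 w - WithLp.toLp 2 z‖ ^ 2} = {0} := by
  have h := setOf_minimizer_add_half_norm_sub_sq_eq_zero
    (K := Metric.closedBall 0 r) (Metric.mem_closedBall_self hr) hz hφ0 hφ
  ext v
  have hv := congrArg (WithLp.toLp 2 v ∈ ·) h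
  simpa [(WithLp.equiv 2 (ι → ℝ)).symm.forall_congr_left] using hv

lemma div_mul_le_mul_apply_div {θ : ℝ → ℝ} {η γ ρ ρbar : ℝ}
    (hθ : ∀ t, 0 ≤ t → η * t ≤ θ t) (hγ : 0 ≤ γ) (hρ0 : 0 < ρ) (hρbar : 0 < ρbar)
    (hρ : ρ ≤ η * ρbar) {t : ℝ} (ht : 0 ≤ t) :
    γ / ρbar * t ≤ γ * θ (t / ρ) := by
  have hscale : t / ρbar ≤ η * (t / ρ) := by
    rw [mul_div_assoc', div_le_div_iff₀ hρbar hρ0]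
    nlinarith
  calc γ / ρbar * t = γ * (t / ρbar) := by ring
    _ ≤ γ * θ (t / ρ) :=
      mul_le_mul_of_nonneg_left (hscale.trans (hθ _ (div_nonneg ht hρ0.le))) hγ

theorem stmt12_general (k : ℕ) (ς : ℝ) (hς : 0 < ς)
    (θ1 : ℝ → ℝ)
    (h0 : θ1 0 = 0)
    (ηt : ℝ)
    (hlb : ∀ t, 0 ≤ t → ηt * t ≤ θ1 t)
    (γ ρbar ρ : ℝ) (hγ : 0 < γ) (hρbar : 0 < ρbar)
    (hρ0 : 0 < ρ) (hρ : ρ ≤ min ηt 1 * ρbar)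
    (z : Fin k → ℝ) (hz : Real.sqrt (∑ i, (z i) ^ 2) ≤ γ / ρbar) :
    {v : Fin k → ℝ | Real.sqrt (∑ i, (v i) ^ 2) ≤ ς ∧
      ∀ w : Fin k → ℝ, Real.sqrt (∑ i, (w i) ^ 2) ≤ ς →
        γ * θ1 (Real.sqrt (∑ i, (v i) ^ 2) / ρ) + (1 / 2) * ∑ i, (v i - z i) ^ 2 ≤
        γ * θ1 (Real.sqrt (∑ i, (w i) ^ 2) / ρ) + (1 / 2) * ∑ i, (w i - z i) ^ 2} = {0} ∧
    {v : Fin k → ℝ | Real.sqrt (∑ i, (v i) ^ 2) ≤ ς ∧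
      ∀ w : Fin k → ℝ, Real.sqrt (∑ i, (w i) ^ 2) ≤ ς →
        γ * (Real.sqrt (∑ i, (v i) ^ 2) / ρbar) + (1 / 2) * ∑ i, (v i - z i) ^ 2 ≤
        γ * (Real.sqrt (∑ i, (w i) ^ 2) / ρbar) + (1 / 2) * ∑ i, (w i - z i) ^ 2} = {0} := by
  have hρη : ρ ≤ ηt * ρbar :=
    hρ.trans (mul_le_mul_of_nonneg_right (min_le_left _ _) hρbar.le)
  simp only [sqrt_sum_sq_eq_norm_toLp, sum_sub_sq_eq_norm_toLp_sub_sq] at hz ⊢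
  constructor
  · exact setOf_minimizer_on_euclideanBall_eq_zero hς.le (φ := fun v => γ * θ1 (‖v‖ / ρ)) hz
      (by simp [h0])
      (fun v => div_mul_le_mul_apply_div hlb hγ.le hρ0 hρbar hρη (norm_nonneg v))
  · exact setOf_minimizer_on_euclideanBall_eq_zero hς.le (φ := fun v => γ * (‖v‖ / ρbar)) hz
      (by simp) (fun v => (by ring : γ / ρbar * ‖v‖ = γ * (‖v‖ / ρbar)).le)

/-- For `z` with `‖z‖₂ ≤ γ/ρ̄`, the minimizers over the ball `{v : ‖v‖₂ ≤ ς}` of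
`v ↦ γ·θ₁(‖v‖₂/ρ) + ½‖v−z‖₂²` and of `v ↦ γ·‖v‖₂/ρ̄ + ½‖v−z‖₂²` are exactly `{0}`. -/
theorem stmt12 (k : ℕ) (hk : 0 < k) (ς : ℝ) (hς : 0 < ς)
    (θ1 : ℝ → ℝ)
    (hmono : ∀ a b, 0 ≤ a → a ≤ b → θ1 a ≤ θ1 b)
    (h0 : θ1 0 = 0)
    (hnn : ∀ t, 0 ≤ t → 0 ≤ θ1 t)
    (ηt : ℝ) (hηt : 0 < ηt)
    (hlb : ∀ t, 0 ≤ t → ηt * t ≤ θ1 t)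
    (γ ρbar ρ : ℝ) (hγ : 0 < γ) (hρbar : 0 < ρbar)
    (hρ0 : 0 < ρ) (hρ : ρ ≤ min ηt 1 * ρbar)
    (z : Fin k → ℝ) (hz : Real.sqrt (∑ i, (z i) ^ 2) ≤ γ / ρbar) :
    {v : Fin k → ℝ | Real.sqrt (∑ i, (v i) ^ 2) ≤ ς ∧
      ∀ w : Fin k → ℝ, Real.sqrt (∑ i, (w i) ^ 2) ≤ ς →
        γ * θ1 (Real.sqrt (∑ i, (v i) ^ 2) / ρ) + (1 / 2) * ∑ i, (v i - z i) ^ 2 ≤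
        γ * θ1 (Real.sqrt (∑ i, (w i) ^ 2) / ρ) + (1 / 2) * ∑ i, (w i - z i) ^ 2} = {0} ∧
    {v : Fin k → ℝ | Real.sqrt (∑ i, (v i) ^ 2) ≤ ς ∧
      ∀ w : Fin k → ℝ, Real.sqrt (∑ i, (w i) ^ 2) ≤ ς →
        γ * (Real.sqrt (∑ i, (v i) ^ 2) / ρbar) + (1 / 2) * ∑ i, (v i - z i) ^ 2 ≤
        γ * (Real.sqrt (∑ i, (w i) ^ 2) / ρbar) + (1 / 2) * ∑ i, (w i - z i) ^ 2} = {0} :=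
  stmt12_general k ς hς θ1 h0 ηt hlb γ ρbar ρ hγ hρbar hρ0 hρ z hz
end
end
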